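/- arXiv:0912.5313 — 2 statements merged into one kernel-verified Lean document; each statement's English description precedes it below -/
import Mathlib

section
/- Let k ≤ N and let v : Fin k → (Fin N → ℝ) be a family of vectors which is linearly independent over ℝ. Let L be the additive subgroup of (Fin N → ℝ) generated by the vectors v i. Then the quotient topological additive group (Fin N → ℝ) ⧸ L is homeomorphic to the product (Fin (N - k) → ℝ) × (Fin k → AddCircle (1 : ℝ)), and in particular it is homotopy equivalent to the k-dimensional torus Fin k → AddCircle (1 : ℝ). -/
open Module Submodule Function

/-- If `L ⊆ ℝ^N` is the additive subgroup generated by `k ≤ N` linearly independent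
vectors, then the quotient topological group `ℝ^N ⧸ L` is homeomorphic to
`ℝ^(N-k) × (S¹)^k`, and in particular homotopy equivalent to the `k`-torus. -/
theorem quotient_by_lattice_homeomorph_and_homotopyEquiv_torus
    (N k : ℕ) (hk : k ≤ N) (v : Fin k → (Fin N → ℝ))
    (hv : LinearIndependent ℝ v)
    (L : AddSubgroup (Fin N → ℝ))
    (hL : L = AddSubgroup.closure (Set.range v)) :
    Nonempty (((Fin N → ℝ) ⧸ L) ≃ₜ
        ((Fin (N - k) → ℝ) × (Fin k → AddCircle (1 : ℝ)))) ∧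
    Nonempty (ContinuousMap.HomotopyEquiv ((Fin N → ℝ) ⧸ L)
        (Fin k → AddCircle (1 : ℝ))) := by
  classical
  set W : Submodule ℝ (Fin N → ℝ) := Submodule.span ℝ (Set.range v) with hW
  obtain ⟨W', hcompl⟩ := Submodule.exists_isCompl W
  have hWk : finrank ℝ W = k := by
    simpa using finrank_span_eq_card hv
  have hW' : finrank ℝ W' = N - k := by
    have h := Submodule.finrank_add_eq_of_isCompl hcompl
    rw [hWk, Module.finrank_fin_fun] at h
    omega
  set bW : Basis (Fin k) ℝ W := Basis.span hv with hbW
  set bW' : Basis (Fin (N - k)) ℝ W' := Module.finBasisOfFinrankEq ℝ W' hW' with hbW'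
  set e : (Fin N → ℝ) ≃ₗ[ℝ] (Fin k → ℝ) × (Fin (N - k) → ℝ) :=
    (Submodule.prodEquivOfIsCompl W W' hcompl).symm.trans (bW.equivFun.prodCongr bW'.equivFun)
    with he
  -- e sends v i to (Pi.single i 1, 0)
  have hev : ∀ i, e (v i) = (Pi.single i 1, 0) := by
    intro i
    have hmem : v i ∈ W := Submodule.subset_span ⟨i, rfl⟩
    have h1 : (Submodule.prodEquivOfIsCompl W W' hcompl).symm (v i) = (⟨v i, hmem⟩, 0) := by
      exact Submodule.prodEquivOfIsCompl_symm_apply_left (p := W) (q := W') hcompl ⟨v i, hmem⟩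
    have h2 : (⟨v i, hmem⟩ : W) = bW i := (Basis.span_apply hv i).symm
    simp only [he, LinearEquiv.trans_apply, h1, h2, LinearEquiv.prodCongr_apply, map_zero]
    refine Prod.ext ?_ rfl
    funext j
    simp [Basis.equivFun_self, Pi.single_apply, eq_comm]
  -- e on integer combinations
  have hsum : ∀ c : Fin k → ℤ, e (∑ i, c i • v i) = ((fun j => (c j : ℝ)), 0) := by
    intro c
    rw [map_sum]
    have : ∀ i, e (c i • v i) = (Pi.single i ((c i : ℝ)), 0) := by
      intro i
      rw [map_zsmul, hev]
      refine Prod.ext ?_ (by simp)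
      funext j
      simp [Pi.single_apply]
    rw [Finset.sum_congr rfl fun i _ => this i]
    refine Prod.ext ?_ (by simp [Prod.snd_sum])
    funext j
    simp [Prod.fst_sum, Finset.sum_apply, Pi.single_apply]
  -- membership in L
  have hmemL : ∀ x, x ∈ L ↔ ∃ c : Fin k → ℤ, x = ∑ i, c i • v i := by
    intro x
    rw [hL]
    constructor
    · intro hx
      induction hx using AddSubgroup.closure_induction with
      | mem y hy =>
        obtain ⟨i, rfl⟩ := hy
        exact ⟨Pi.single i 1, by simp [Pi.single_apply, ite_smul]⟩
      | zero => exact ⟨0, by simp⟩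
      | add y z _ _ hy hz =>
        obtain ⟨c, rfl⟩ := hy
        obtain ⟨d, rfl⟩ := hz
        exact ⟨c + d, by rw [← Finset.sum_add_distrib]; simp [add_smul]⟩
      | neg y _ hy =>
        obtain ⟨c, rfl⟩ := hy
        exact ⟨-c, by rw [← Finset.sum_neg_distrib]; simp [neg_smul]⟩
    · rintro ⟨c, rfl⟩
      exact AddSubgroup.sum_mem _ fun i _ =>
        AddSubgroup.zsmul_mem _ (AddSubgroup.subset_closure (Set.mem_range_self i)) _
  -- the map f
  set f : (Fin N → ℝ) → ((Fin (N - k) → ℝ) × (Fin k → AddCircle (1 : ℝ))) :=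
    fun x => ((e x).2, fun i => ((e x).1 i : AddCircle (1 : ℝ))) with hf
  have hfadd : ∀ x y, f (x + y) = f x + f y := by
    intro x y
    simp only [hf, map_add]
    refine Prod.ext rfl ?_
    funext i
    simp
  have hker : ∀ x, f x = 0 ↔ x ∈ L := by
    intro x
    constructor
    · intro hx
      rw [Prod.ext_iff] at hx
      obtain ⟨h2, h1⟩ := hx
      have h1' : ∀ i, ∃ n : ℤ, ((e x).1 i : ℝ) = (n : ℝ) := by
        intro i
        have h0 : ((e x).1 i : AddCircle (1 : ℝ)) = 0 := by
          exact congrFun h1 i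
        rw [AddCircle.coe_eq_zero_iff] at h0
        obtain ⟨n, hn⟩ := h0
        exact ⟨n, by simpa using hn.symm⟩
      choose n hn using h1'
      rw [hmemL]
      refine ⟨n, ?_⟩
      apply e.injective
      rw [hsum]
      refine Prod.ext ?_ (by simpa using h2)
      funext j
      exact hn j
    · intro hx
      rw [hmemL] at hx
      obtain ⟨c, rfl⟩ := hx
      rw [hf]
      simp only [hsum]
      refine Prod.ext rfl (funext fun i => ?_)
      show (((c i : ℝ)) : AddCircle (1 : ℝ)) = 0
      rw [AddCircle.coe_eq_zero_iff]
      exact ⟨c i, by simp⟩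
  have hecont : Continuous e := by have := LinearMap.continuous_of_finiteDimensional e.toLinearMap; exact this
  have hfcont : Continuous f := by
    refine Continuous.prodMk (continuous_snd.comp hecont) ?_
    refine continuous_pi fun i => ?_
    exact continuous_quotient_mk'.comp ((continuous_apply i).comp (continuous_fst.comp hecont))
  have hfopen : IsOpenMap f := by
    have h1 : IsOpenMap (e : (Fin N → ℝ) → (Fin k → ℝ) × (Fin (N - k) → ℝ)) :=
      (LinearEquiv.toContinuousLinearEquiv e).toHomeomorph.isOpenMap
    have h2 : IsOpenMap (fun p : (Fin k → ℝ) × (Fin (N - k) → ℝ) =>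
        ((p.2 : Fin (N - k) → ℝ), fun i => ((p.1 i : AddCircle (1 : ℝ))))) := by
      have hswap : IsOpenMap (Prod.swap : (Fin k → ℝ) × (Fin (N - k) → ℝ) → _) :=
        (Homeomorph.prodComm _ _).isOpenMap
      have hpi : IsOpenMap (Pi.map fun (_ : Fin k) (r : ℝ) => (r : AddCircle (1 : ℝ))) :=
        IsOpenMap.piMap (fun _ => QuotientAddGroup.isOpenMap_coe)
          (Filter.Eventually.of_forall fun _ => QuotientAddGroup.mk_surjective)
      have := (IsOpenMap.id.prodMap hpi).comp hswap
      exact this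
    exact h2.comp h1
  have hfsurj : Surjective f := by
    rintro ⟨y, z⟩
    choose w hw using fun i => Quotient.exists_rep (z i)
    refine ⟨e.symm (w, y), ?_⟩
    rw [hf]
    simp only [LinearEquiv.apply_symm_apply]
    exact Prod.ext rfl (funext fun i => hw i)
  -- build the homeomorphism
  set φ : (Fin N → ℝ) →+ ((Fin (N - k) → ℝ) × (Fin k → AddCircle (1 : ℝ))) :=
    AddMonoidHom.mk' f hfadd with hφ
  set Φ : ((Fin N → ℝ) ⧸ L) → ((Fin (N - k) → ℝ) × (Fin k → AddCircle (1 : ℝ))) :=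
    ⇑(QuotientAddGroup.lift L φ (fun x hx => (hker x).2 hx)) with hΦ
  have hΦmk : ∀ x, Φ (QuotientAddGroup.mk x) = f x := fun x => rfl
  have hΦbij : Bijective Φ := by
    constructor
    · intro a b hab
      obtain ⟨x, rfl⟩ := QuotientAddGroup.mk_surjective a
      obtain ⟨y, rfl⟩ := QuotientAddGroup.mk_surjective b
      rw [hΦmk, hΦmk] at hab
      rw [QuotientAddGroup.eq]
      apply (hker _).1
      have : φ (-x + y) = -φ x + φ y := by rw [map_add, map_neg]
      show φ (-x + y) = 0
      rw [this]
      show -f x + f y = 0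
      rw [hab]
      simp
    · intro y
      obtain ⟨x, hx⟩ := hfsurj y
      exact ⟨QuotientAddGroup.mk x, by rw [hΦmk, hx]⟩
  have hΦcont : Continuous Φ := by
    rw [(QuotientAddGroup.isQuotientMap_mk L).continuous_iff]
    exact hfcont
  have hΦopen : IsOpenMap Φ := by
    intro U hU
    have himg : Φ '' U = f '' ((QuotientAddGroup.mk : (Fin N → ℝ) → _) ⁻¹' U) := by
      ext p
      constructor
      · rintro ⟨a, ha, rfl⟩
        obtain ⟨x, rfl⟩ := QuotientAddGroup.mk_surjective a
        exact ⟨x, ha, rfl⟩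
      · rintro ⟨x, hx, rfl⟩
        exact ⟨QuotientAddGroup.mk x, hx, rfl⟩
    rw [himg]
    exact hfopen _ (hU.preimage continuous_quotient_mk')
  have H : ((Fin N → ℝ) ⧸ L) ≃ₜ ((Fin (N - k) → ℝ) × (Fin k → AddCircle (1 : ℝ))) :=
    Equiv.toHomeomorphOfContinuousOpen (Equiv.ofBijective Φ hΦbij) hΦcont hΦopen
  refine ⟨⟨H⟩, ?_⟩
  obtain ⟨hcontr⟩ := ContractibleSpace.hequiv_unit (Fin (N - k) → ℝ)
  exact ⟨H.toHomotopyEquiv.trans ((hcontr.prodCongr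
    (ContinuousMap.HomotopyEquiv.refl _)).trans (Homeomorph.punitProd _).toHomotopyEquiv)⟩
end

section
/- For every natural number m, every n ≥ 2, and every basepoint x, the n-th homotopy group π_n of the m-dimensional torus Fin m → AddCircle (1 : ℝ) is trivial, i.e. a subsingleton. -/
open scoped unitInterval Topology
open Set

noncomputable section

namespace TorusPi2

variable {n : ℕ}

/-- Scaling a point of the cube by `t ∈ I`. -/
def sc (t : I) (y : Fin n → I) : Fin n → I :=
  fun i => ⟨(t : ℝ) * (y i : ℝ), unitInterval.mul_mem t.2 (y i).2⟩

lemma continuous_sc (t : I) : Continuous (sc (n := n) t) :=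
  continuous_pi fun i =>
    Continuous.subtype_mk (continuous_const.mul (continuous_subtype_val.comp (continuous_apply i))) _

lemma sc_zero (y : Fin n → I) : sc 0 y = fun _ => 0 := by
  funext i; simp [sc]

lemma sc_one (y : Fin n → I) : sc 1 y = y := by
  funext i; simp [sc]

lemma dist_sc_le (t s : I) (y : Fin n → I) : dist (sc t y) (sc s y) ≤ |(t : ℝ) - s| := by
  rw [dist_pi_le_iff (abs_nonneg _)]
  intro i
  rw [Subtype.dist_eq]
  simp only [sc]
  rw [Real.dist_eq]
  have h : (t : ℝ) * (y i : ℝ) - (s : ℝ) * (y i : ℝ) = ((t : ℝ) - s) * (y i : ℝ) := by ring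
  rw [h, abs_mul]
  have h1 : |(y i : ℝ)| ≤ 1 := by
    rw [abs_of_nonneg (y i).2.1]; exact (y i).2.2
  calc |(t : ℝ) - s| * |(y i : ℝ)| ≤ |(t : ℝ) - s| * 1 := by gcongr
    _ = |(t : ℝ) - s| := mul_one _

/-- The local inverse of `ℝ → ℝ/ℤ` with values in `(-1/2, 1/2]`. -/
def δf : AddCircle (1 : ℝ) → ℝ := fun w => (AddCircle.equivIoc 1 (-(1/2)) w : ℝ)

lemma coe_δf (w : AddCircle (1 : ℝ)) : ((δf w : ℝ) : AddCircle (1 : ℝ)) = w :=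
  (AddCircle.equivIoc 1 (-(1/2))).symm_apply_apply w

lemma continuousAt_δf {w : AddCircle (1 : ℝ)} (hw : ‖w‖ < 1/2) : ContinuousAt δf w := by
  have hne : w ≠ ((-(1/2) : ℝ) : AddCircle (1 : ℝ)) := by
    intro h
    have h2 : ‖((-(1/2) : ℝ) : AddCircle (1 : ℝ))‖ = 1/2 := by
      have : ((-(1/2) : ℝ) : AddCircle (1 : ℝ)) = -(((1:ℝ)/2 : ℝ) : AddCircle (1 : ℝ)) := by
        norm_num
      rw [this, norm_neg]
      have := AddCircle.norm_half_period_eq (1 : ℝ)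
      simpa using this
    rw [h, h2] at hw; linarith
  exact continuous_subtype_val.continuousAt.comp (AddCircle.continuousAt_equivIoc 1 _ hne)

/-- Every continuous map from the cube to the circle lifts to `ℝ`. -/
lemma exists_lift (f : C((Fin n → I), AddCircle (1 : ℝ))) :
    ∃ g : (Fin n → I) → ℝ, Continuous g ∧ ∀ y, ((g y : ℝ) : AddCircle (1 : ℝ)) = f y := by
  have hcu : UniformContinuous f := CompactSpace.uniformContinuous_of_continuous f.continuous
  obtain ⟨δ, hδ, hδ'⟩ := Metric.uniformContinuous_iff.mp hcu (1/2) (by norm_num)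
  obtain ⟨N, hN⟩ := exists_nat_gt (1/δ)
  have hN0 : 0 < N := by
    rcases Nat.eq_zero_or_pos N with h | h
    · exfalso
      rw [h] at hN
      norm_num at hN
      linarith [one_div_pos.mpr hδ]
    · exact h
  have hN0' : (0:ℝ) < N := by exact_mod_cast hN0
  have tkmem : ∀ k : ℕ, min ((k : ℝ)/N) 1 ∈ I := fun k =>
    ⟨le_min (by positivity) zero_le_one, min_le_right _ _⟩
  set tk : ℕ → I := fun k => ⟨min ((k : ℝ)/N) 1, tkmem k⟩ with htk_def
  have htk : ∀ k, k ≤ N → (tk k : ℝ) = (k : ℝ)/N := by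
    intro k hk
    simp only [htk_def]
    exact min_eq_left (by rw [div_le_one hN0']; exact_mod_cast hk)
  have hdist : ∀ k, k < N → ∀ y : Fin n → I,
      ‖f (sc (tk (k+1)) y) - f (sc (tk k) y)‖ < 1/2 := by
    intro k hk y
    rw [← dist_eq_norm]
    apply hδ'
    calc dist (sc (tk (k+1)) y) (sc (tk k) y) ≤ |(tk (k+1) : ℝ) - (tk k : ℝ)| :=
          dist_sc_le _ _ _
      _ = 1/N := by
          rw [htk (k+1) hk, htk k hk.le]
          have heq : ((k:ℝ)+1)/N - (k:ℝ)/N = 1/N := by field_simp; ring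
          push_cast
          rw [heq, abs_of_nonneg (by positivity)]
      _ < δ := by
          rw [div_lt_iff₀ hN0']
          rw [div_lt_iff₀ hδ] at hN
          linarith
  set c₀ : ℝ := δf (f fun _ => 0) with hc₀
  refine ⟨fun y => c₀ + ∑ k ∈ Finset.range N,
    δf (f (sc (tk (k+1)) y) - f (sc (tk k) y)), ?_, ?_⟩
  · apply Continuous.add continuous_const
    apply continuous_finset_sum
    intro k hk
    rw [Finset.mem_range] at hk
    have hd : Continuous fun y : Fin n → I => f (sc (tk (k+1)) y) - f (sc (tk k) y) :=
      (f.continuous.comp (continuous_sc _)).sub (f.continuous.comp (continuous_sc _))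
    rw [continuous_iff_continuousAt]
    intro y
    exact ContinuousAt.comp (f := fun y : Fin n → I => f (sc (tk (k+1)) y) - f (sc (tk k) y))
      (continuousAt_δf (hdist k hk y)) hd.continuousAt
  · intro y
    have hadd : ∀ a b : ℝ, ((a + b : ℝ) : AddCircle (1 : ℝ)) = (a : AddCircle (1:ℝ)) + b := fun a b => rfl
    have hmk : ((∑ k ∈ Finset.range N, δf (f (sc (tk (k+1)) y) - f (sc (tk k) y)) : ℝ) :
        AddCircle (1 : ℝ)) = ∑ k ∈ Finset.range N, (f (sc (tk (k+1)) y) - f (sc (tk k) y)) := by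
      rw [show ((↑) : ℝ → AddCircle (1:ℝ)) = (QuotientAddGroup.mk' _ : ℝ →+ AddCircle (1:ℝ)) from rfl,
        map_sum]
      refine Finset.sum_congr rfl fun k _ => ?_
      exact coe_δf _
    rw [hadd, hmk, hc₀, coe_δf, Finset.sum_range_sub (fun k => f (sc (tk k) y))]
    have h0 : f (sc (tk 0) y) = f (fun _ => 0) := by
      congr 1
      have : tk 0 = 0 := by
        simp only [htk_def]
        ext; simp
      rw [this, sc_zero]
    have h1 : f (sc (tk N) y) = f y := by
      congr 1
      have : tk N = 1 := by
        simp only [htk_def]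
        ext
        simp [div_self hN0'.ne']
      rw [this, sc_one]
    rw [h0, h1]
    abel

lemma boundary_preconnected (hn : 2 ≤ n) : IsPreconnected (Cube.boundary (Fin n)) := by
  classical
  have hface : ∀ (i : Fin n) (b : I), IsPreconnected {y : Fin n → I | y i = b} := by
    intro i b
    have hrange : {y : Fin n → I | y i = b} =
        Set.range (fun y : Fin n → I => Function.update y i b) := by
      ext y
      constructor
      · intro hy
        refine ⟨y, ?_⟩
        funext j
        by_cases hj : j = i
        · subst hj
          have hy' : y j = b := hy
          simp [Function.update_self, hy']
        · simp [Function.update_of_ne hj]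
      · rintro ⟨z, rfl⟩
        simp [Function.update_self]
    rw [hrange]
    exact isPreconnected_range (continuous_id.update i continuous_const)
  have h0 : (0:ℕ) < n := by omega
  set i0 : Fin n := ⟨0, by omega⟩
  set i1 : Fin n := ⟨1, by omega⟩
  have hne : i0 ≠ i1 := by simp [i0, i1, Fin.ext_iff]
  set A : Set (Fin n → I) := ⋃₀ ((fun i : Fin n => {y : Fin n → I | y i = 0}) '' univ) with hA_def
  set A' : Set (Fin n → I) := ⋃₀ ((fun i : Fin n => {y : Fin n → I | y i = 1}) '' univ) with hA'_def
  have hA : IsPreconnected A := by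
    apply isPreconnected_sUnion (fun _ => (0:I))
    · rintro s ⟨i, -, rfl⟩; simp
    · rintro s ⟨i, -, rfl⟩; exact hface i 0
  have hA' : IsPreconnected A' := by
    apply isPreconnected_sUnion (fun _ => (1:I))
    · rintro s ⟨i, -, rfl⟩; simp
    · rintro s ⟨i, -, rfl⟩; exact hface i 1
  set p : Fin n → I := Function.update (fun _ => (0:I)) i1 1 with hp_def
  have hpA : p ∈ A := by
    refine ⟨{y : Fin n → I | y i0 = 0}, ⟨i0, mem_univ _, rfl⟩, ?_⟩
    simp [hp_def, Function.update_of_ne hne]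
  have hpA' : p ∈ A' := by
    refine ⟨{y : Fin n → I | y i1 = 1}, ⟨i1, mem_univ _, rfl⟩, ?_⟩
    simp [hp_def]
  have hB : Cube.boundary (Fin n) = A ∪ A' := by
    ext y
    simp only [Cube.boundary, mem_setOf_eq, hA_def, hA'_def, mem_union, mem_sUnion,
      mem_image, mem_univ, true_and]
    constructor
    · rintro ⟨i, h | h⟩
      · exact Or.inl ⟨_, ⟨i, rfl⟩, h⟩
      · exact Or.inr ⟨_, ⟨i, rfl⟩, h⟩
    · rintro (⟨s, ⟨i, rfl⟩, h⟩ | ⟨s, ⟨i, rfl⟩, h⟩)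
      · exact ⟨i, Or.inl h⟩
      · exact ⟨i, Or.inr h⟩
  rw [hB]
  exact IsPreconnected.union p hpA hpA' hA hA'

open Topology.Homotopy in
lemma genLoop_homotopic_const {m : ℕ} (hn : 2 ≤ n) (x : Fin m → AddCircle (1 : ℝ))
    (f : GenLoop (Fin n) (Fin m → AddCircle (1 : ℝ)) x) :
    GenLoop.Homotopic f GenLoop.const := by
  have hfc : ∀ j : Fin m, Continuous fun y : Fin n → I => f.1 y j := fun j =>
    (continuous_apply j).comp f.1.continuous
  choose g hgc hg using fun j : Fin m => exists_lift ⟨fun y => f.1 y j, hfc j⟩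
  simp only [ContinuousMap.coe_mk] at hg
  set y₀ : Fin n → I := fun _ => 0 with hy₀
  have hy₀B : y₀ ∈ Cube.boundary (Fin n) := ⟨⟨0, by omega⟩, Or.inl rfl⟩
  have hcoe_sub : ∀ a b : ℝ, ((a - b : ℝ) : AddCircle (1 : ℝ)) = (a : AddCircle (1:ℝ)) - b :=
    fun a b => rfl
  -- the lift is constant on the (connected) boundary
  have hconst : ∀ j : Fin m, ∀ y ∈ Cube.boundary (Fin n), g j y = g j y₀ := by
    intro j y hyB
    set ψ : (Fin n → I) → ℝ := fun z => g j z - g j y₀ with hψ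
    have hψc : Continuous ψ := (hgc j).sub continuous_const
    have hint : ∀ z ∈ Cube.boundary (Fin n), ∃ k : ℤ, ψ z = k := by
      intro z hz
      have h1 : ((ψ z : ℝ) : AddCircle (1 : ℝ)) = 0 := by
        rw [hψ]
        simp only []
        rw [hcoe_sub, hg j z, hg j y₀, f.2 z hz, f.2 y₀ hy₀B,
          sub_self]
      obtain ⟨k, hk⟩ := (AddCircle.coe_eq_zero_iff (1:ℝ)).mp h1
      exact ⟨k, by rw [← hk]; simp⟩
    set S : Set ℝ := ψ '' (Cube.boundary (Fin n)) with hS_def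
    have hS : IsPreconnected S :=
      (boundary_preconnected hn).image ψ hψc.continuousOn
    have h0S : (0:ℝ) ∈ S := ⟨y₀, hy₀B, by simp [hψ]⟩
    have hyS : ψ y ∈ S := ⟨y, hyB, rfl⟩
    have hhalf : ∀ r : ℝ, r ∈ S → 2 * r ≠ 1 ∧ 2 * r ≠ -1 := by
      rintro r ⟨z, hz, rfl⟩
      obtain ⟨k, hk⟩ := hint z hz
      rw [hk]
      constructor
      · intro h
        have : (2 * k : ℤ) = 1 := by exact_mod_cast h
        omega
      · intro h
        have : (2 * k : ℤ) = -1 := by exact_mod_cast h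
        omega
    have hψy : ψ y = 0 := by
      by_contra hne
      obtain ⟨k, hk⟩ := hint y hyB
      rcases lt_or_gt_of_ne hne with hlt | hgt
      · have hk0 : k < 0 := by
          have h' : (k : ℝ) < 0 := by rw [← hk]; exact hlt
          exact_mod_cast h'
        have hk1 : (k : ℝ) ≤ -1 := by
          have : k ≤ -1 := by omega
          exact_mod_cast this
        have hmem : (-(1/2) : ℝ) ∈ Icc (ψ y) 0 := by
          constructor <;> [rw [hk]; skip] <;> linarith
        have := hS.Icc_subset hyS h0S hmem
        exact absurd (by norm_num : 2 * (-(1/2) : ℝ) = -1) (hhalf _ this).2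
      · have hk0 : 0 < k := by
          have h' : (0:ℝ) < k := by rw [← hk]; exact hgt
          exact_mod_cast h'
        have hk1 : (1:ℝ) ≤ k := by
          have : 1 ≤ k := by omega
          exact_mod_cast this
        have hmem : ((1/2) : ℝ) ∈ Icc 0 (ψ y) := by
          constructor <;> [skip; rw [hk]] <;> linarith
        have := hS.Icc_subset h0S hyS hmem
        exact absurd (by norm_num : 2 * ((1/2) : ℝ) = 1) (hhalf _ this).1
    have := hψy
    rw [hψ] at this
    simpa [sub_eq_zero] using this
  set c : Fin m → ℝ := fun j => g j y₀ with hc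
  have hxc : ∀ j, ((c j : ℝ) : AddCircle (1:ℝ)) = x j := by
    intro j
    rw [hc]
    simp only []
    rw [hg j y₀, f.2 y₀ hy₀B]
  refine ⟨⟨⟨⟨fun p => fun j => ↑((1 - (p.1 : ℝ)) * g j p.2 + (p.1 : ℝ) * c j), ?_⟩, ?_, ?_⟩, ?_⟩⟩
  · refine continuous_pi fun j => Continuous.comp (AddCircle.continuous_mk' 1) ?_
    exact ((continuous_const.sub (continuous_subtype_val.comp continuous_fst)).mul
      ((hgc j).comp continuous_snd)).add
      ((continuous_subtype_val.comp continuous_fst).mul continuous_const)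
  · intro y
    funext j
    show (((1 - ((0:I) : ℝ)) * g j y + ((0:I) : ℝ) * c j : ℝ) : AddCircle (1:ℝ)) = f.1 y j
    rw [show ((1 - ((0:I) : ℝ)) * g j y + ((0:I) : ℝ) * c j : ℝ) = g j y by norm_num]
    exact hg j y
  · intro y
    funext j
    show (((1 - ((1:I) : ℝ)) * g j y + ((1:I) : ℝ) * c j : ℝ) : AddCircle (1:ℝ)) = x j
    rw [show ((1 - ((1:I) : ℝ)) * g j y + ((1:I) : ℝ) * c j : ℝ) = c j by norm_num]
    exact hxc j
  · intro t y hyB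
    funext j
    show (((1 - (t : ℝ)) * g j y + (t : ℝ) * c j : ℝ) : AddCircle (1:ℝ)) = f.1 y j
    rw [hconst j y hyB]
    rw [show ((1 - (t : ℝ)) * g j y₀ + (t : ℝ) * c j : ℝ) = c j by rw [hc]; ring]
    rw [hxc j, f.2 y hyB]

end TorusPi2

/-- For `n ≥ 2`, the `n`-th homotopy group of the `m`-dimensional torus
`(S¹)^m` at any basepoint is trivial. -/
theorem homotopyGroup_torus_subsingleton (m n : ℕ) (hn : 2 ≤ n)
    (x : Fin m → AddCircle (1 : ℝ)) :
    Subsingleton (HomotopyGroup (Fin n) (Fin m → AddCircle (1 : ℝ)) x) := by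
  constructor
  intro a b
  refine Quotient.inductionOn₂ a b fun p q => Quotient.sound ?_
  exact (TorusPi2.genLoop_homotopic_const hn x p).trans
    (TorusPi2.genLoop_homotopic_const hn x q).symm
end
end
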